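/- Along a continuous path S with δ-excursion decomposition, the worst loss of the strategy φ⁺ on [0,t] equals max over k = 0,…,D^δ_t(S) of max_{[0, (t − τ⁺_{k+1})₊]} (v_{k+1} − (k+1)δ), where v_{k+1} is the (k+1)-th downward piece of the decomposition. -/

import Mathlib

open scoped ENNReal
noncomputable section

def hitAfter (S : ℝ → ℝ) (P : ℝ → Prop) (a : ℝ≥0∞) : ℝ≥0∞ :=
  sInf {t : ℝ≥0∞ | a < t ∧ t < ⊤ ∧ P (S t.toReal)}

def thetaSeq (S : ℝ → ℝ) (δ : ℝ) : ℕ → ℝ≥0∞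
  | 0 => 0
  | n + 1 => hitAfter S (fun x => x ≤ 0) (hitAfter S (fun x => δ ≤ x) (thetaSeq S δ n))

def tauSeq (S : ℝ → ℝ) (δ : ℝ) : ℕ → ℝ≥0∞
  | 0 => 0
  | n + 1 => hitAfter S (fun x => δ ≤ x) (thetaSeq S δ n)

def clip (t : ℝ) (a : ℝ≥0∞) : ℝ := if a < ⊤ then min t a.toReal else t

def Dnum (S : ℝ → ℝ) (δ : ℝ) (t : ℝ) : ℕ :=
  {i : ℕ | 1 ≤ i ∧ thetaSeq S δ i ≤ ENNReal.ofReal t}.ncard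

def portfolioGain (S : ℝ → ℝ) (δ : ℝ) (t : ℝ) : ℝ :=
  ∑' i : ℕ, (S (clip t (tauSeq S δ (i + 1))) - S (clip t (thetaSeq S δ (i + 1))))

def vpiece (S : ℝ → ℝ) (δ : ℝ) (i : ℕ) (s : ℝ) : ℝ :=
  δ + S (clip (s + (tauSeq S δ i).toReal) (thetaSeq S δ i)) - S ((tauSeq S δ i).toReal)

lemma le_hitAfter (S : ℝ → ℝ) (P : ℝ → Prop) (a : ℝ≥0∞) : a ≤ hitAfter S P a :=
  le_sInf fun _ ht => ht.1.le

lemma hitAfter_top (S : ℝ → ℝ) (P : ℝ → Prop) : hitAfter S P ⊤ = ⊤ := by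
  have : {t : ℝ≥0∞ | ⊤ < t ∧ t < ⊤ ∧ P (S t.toReal)} = ∅ := by
    ext x; simp only [Set.mem_setOf_eq, Set.mem_empty_iff_false, iff_false]
    rintro ⟨h1, h2, -⟩; exact absurd (h1.trans h2) (lt_irrefl _)
  rw [hitAfter, this, sInf_empty]

lemma hitAfter_mem {S : ℝ → ℝ} (hS : Continuous S) {P : ℝ → Prop}
    (hP : IsClosed {x | P x}) {a : ℝ≥0∞} (h : hitAfter S P a < ⊤) :
    P (S (hitAfter S P a).toReal) := by
  set τ := hitAfter S P a with hτ
  by_contra hc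
  have hopen : IsOpen (S ⁻¹' {x | P x}ᶜ) := (hP.isOpen_compl).preimage hS
  have hmem : τ.toReal ∈ S ⁻¹' {x | P x}ᶜ := hc
  obtain ⟨ε, hε, hball⟩ := Metric.isOpen_iff.1 hopen _ hmem
  have key : ENNReal.ofReal (τ.toReal + ε) ≤ τ := by
    refine le_sInf fun s hs => ?_
    by_contra hlt
    push_neg at hlt
    have hsτ : τ ≤ s := sInf_le hs
    have hsfin : s < ⊤ := hs.2.1
    have h1 : τ.toReal ≤ s.toReal := ENNReal.toReal_mono hsfin.ne hsτ
    have h2 : s.toReal < τ.toReal + ε := by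
      have h3 := (ENNReal.toReal_lt_toReal hsfin.ne (ENNReal.ofReal_ne_top)).2 hlt
      rwa [ENNReal.toReal_ofReal (by positivity)] at h3
    have : s.toReal ∈ Metric.ball τ.toReal ε := by
      rw [Metric.mem_ball, Real.dist_eq, abs_sub_lt_iff]
      constructor <;> linarith
    exact (hball this) hs.2.2
  have : τ < ENNReal.ofReal (τ.toReal + ε) := by
    conv_lhs => rw [← ENNReal.ofReal_toReal h.ne]
    exact (ENNReal.ofReal_lt_ofReal_iff (by positivity)).2 (by linarith [ENNReal.toReal_nonneg (a := τ)])
  exact absurd (lt_of_lt_of_le this key) (lt_irrefl _)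

lemma hitAfter_min {S : ℝ → ℝ} {P : ℝ → Prop} {a s : ℝ≥0∞}
    (has : a < s) (hsτ : s < hitAfter S P a) (hstop : s < ⊤) : ¬ P (S s.toReal) :=
  fun hp => absurd (sInf_le (show s ∈ {t : ℝ≥0∞ | a < t ∧ t < ⊤ ∧ P (S t.toReal)} from ⟨has, hstop, hp⟩)) (not_le.2 hsτ)

-- clip lemmas
lemma clip_of_le {s : ℝ} {a : ℝ≥0∞} (hs : 0 ≤ s) (h : ENNReal.ofReal s ≤ a) : clip s a = s := by
  rw [clip]
  split_ifs with hfin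
  · refine min_eq_left ?_
    have := ENNReal.toReal_mono hfin.ne h
    rwa [ENNReal.toReal_ofReal hs] at this
  · rfl

lemma clip_of_ge {s : ℝ} {a : ℝ≥0∞} (hs : 0 ≤ s) (h : a ≤ ENNReal.ofReal s) :
    clip s a = a.toReal := by
  have hfin : a < ⊤ := lt_of_le_of_lt h (by simp)
  rw [clip, if_pos hfin]
  refine min_eq_right ?_
  have := ENNReal.toReal_mono (by simp) h
  rwa [ENNReal.toReal_ofReal hs] at this

lemma clip_mono {s : ℝ} (hs : 0 ≤ s) {a b : ℝ≥0∞} (hab : a ≤ b) : clip s a ≤ clip s b := by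
  rw [clip, clip]
  split_ifs with h1 h2 h2
  · exact min_le_min le_rfl (ENNReal.toReal_mono h2.ne hab)
  · exact min_le_left _ _
  · exact absurd (lt_of_le_of_lt hab h2) h1
  · exact le_rfl

lemma clip_nonneg {s : ℝ} (hs : 0 ≤ s) (a : ℝ≥0∞) : 0 ≤ clip s a := by
  rw [clip]; split_ifs
  · exact le_min hs ENNReal.toReal_nonneg
  · exact hs

lemma clip_le_self {s : ℝ} (a : ℝ≥0∞) : clip s a ≤ s := by
  rw [clip]; split_ifs
  · exact min_le_left _ _
  · exact le_rfl

-- limit helpers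
lemma le_of_forall_Ioo {f : ℝ → ℝ} (hf : Continuous f) {a b c : ℝ} (hab : a < b)
    (h : ∀ u ∈ Set.Ioo a b, f u ≤ c) : f b ≤ c := by
  have h1 : Filter.Tendsto f (nhdsWithin b (Set.Iio b)) (nhds (f b)) :=
    (hf.tendsto b).mono_left nhdsWithin_le_nhds
  have hmem : Set.Ioo a b ∈ nhdsWithin b (Set.Iio b) :=
    Ioo_mem_nhdsLT_of_mem ⟨hab, le_rfl⟩
  exact le_of_tendsto h1 (Filter.eventually_of_mem hmem h)

lemma ge_of_forall_Ioo {f : ℝ → ℝ} (hf : Continuous f) {a b c : ℝ} (hab : a < b)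
    (h : ∀ u ∈ Set.Ioo a b, c ≤ f u) : c ≤ f b := by
  have h1 : Filter.Tendsto f (nhdsWithin b (Set.Iio b)) (nhds (f b)) :=
    (hf.tendsto b).mono_left nhdsWithin_le_nhds
  have hmem : Set.Ioo a b ∈ nhdsWithin b (Set.Iio b) :=
    Ioo_mem_nhdsLT_of_mem ⟨hab, le_rfl⟩
  exact ge_of_tendsto h1 (Filter.eventually_of_mem hmem h)

section vals
variable {S : ℝ → ℝ} {δ : ℝ}

lemma theta_le_tau (n : ℕ) : thetaSeq S δ n ≤ tauSeq S δ (n + 1) := le_hitAfter _ _ _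

lemma tau_le_theta (n : ℕ) : tauSeq S δ (n + 1) ≤ thetaSeq S δ (n + 1) := le_hitAfter _ _ _

lemma theta_mono : Monotone (thetaSeq S δ) :=
  monotone_nat_of_le_succ fun n => (theta_le_tau n).trans (tau_le_theta n)

lemma theta_zero : thetaSeq S δ 0 = 0 := rfl

lemma theta_nonpos (hS : Continuous S) (n : ℕ) (h : thetaSeq S δ (n + 1) < ⊤) :
    S ((thetaSeq S δ (n + 1)).toReal) ≤ 0 :=
  hitAfter_mem hS (isClosed_le continuous_id continuous_const) h

lemma tau_ge (hS : Continuous S) (n : ℕ) (h : tauSeq S δ (n + 1) < ⊤) :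
    δ ≤ S ((tauSeq S δ (n + 1)).toReal) :=
  hitAfter_mem hS (isClosed_le continuous_const continuous_id) h

lemma theta_lt_delta (hS : Continuous S) (hS0 : S 0 = 0) (hδ : 0 < δ) (n : ℕ)
    (h : thetaSeq S δ n < ⊤) : S ((thetaSeq S δ n).toReal) < δ := by
  cases n with
  | zero => simpa [theta_zero, hS0] using hδ
  | succ m => exact lt_of_le_of_lt (theta_nonpos hS m h) hδ

lemma tau_val (hS : Continuous S) (hS0 : S 0 = 0) (hδ : 0 < δ) (n : ℕ)
    (h : tauSeq S δ (n + 1) < ⊤) : S ((tauSeq S δ (n + 1)).toReal) = δ := by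
  have hge := tau_ge hS n h
  set τ := tauSeq S δ (n + 1) with hτdef
  set a := thetaSeq S δ n with hadef
  have hat : a ≤ τ := theta_le_tau n
  have hafin : a < ⊤ := lt_of_le_of_lt hat h
  have hSa : S a.toReal < δ := theta_lt_delta hS hS0 hδ n hafin
  have hne : a ≠ τ := fun he => by rw [← he] at hge; linarith
  have hlt : a < τ := lt_of_le_of_ne hat hne
  have hltR : a.toReal < τ.toReal := (ENNReal.toReal_lt_toReal hafin.ne h.ne).2 hlt
  have hle : S τ.toReal ≤ δ := by
    refine le_of_forall_Ioo hS hltR fun u hu => ?_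
    have hu0 : 0 ≤ u := le_trans ENNReal.toReal_nonneg hu.1.le
    have h1 : a < ENNReal.ofReal u := by
      rw [← ENNReal.ofReal_toReal hafin.ne]
      exact (ENNReal.ofReal_lt_ofReal_iff (lt_of_le_of_lt ENNReal.toReal_nonneg hu.1)).2 hu.1
    have h2 : ENNReal.ofReal u < τ := (ENNReal.ofReal_lt_iff_lt_toReal hu0 h.ne).2 hu.2
    have h3 := hitAfter_min (S := S) (P := fun x => δ ≤ x) (a := a) h1 h2 (by simp)
    rw [ENNReal.toReal_ofReal hu0] at h3
    linarith [not_le.1 h3]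
  linarith

lemma theta_val (hS : Continuous S) (hS0 : S 0 = 0) (hδ : 0 < δ) (n : ℕ)
    (h : thetaSeq S δ (n + 1) < ⊤) : S ((thetaSeq S δ (n + 1)).toReal) = 0 := by
  have hle := theta_nonpos hS n h
  set θ := thetaSeq S δ (n + 1) with hθdef
  set a := tauSeq S δ (n + 1) with hadef
  have hat : a ≤ θ := tau_le_theta n
  have hafin : a < ⊤ := lt_of_le_of_lt hat h
  have hSa : S a.toReal = δ := tau_val hS hS0 hδ n hafin
  have hne : a ≠ θ := fun he => by rw [← he] at hle; linarith
  have hlt : a < θ := lt_of_le_of_ne hat hne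
  have hltR : a.toReal < θ.toReal := (ENNReal.toReal_lt_toReal hafin.ne h.ne).2 hlt
  have hge : (0:ℝ) ≤ S θ.toReal := by
    refine ge_of_forall_Ioo hS hltR fun u hu => ?_
    have hu0 : 0 ≤ u := le_trans ENNReal.toReal_nonneg hu.1.le
    have h1 : a < ENNReal.ofReal u := by
      rw [← ENNReal.ofReal_toReal hafin.ne]
      exact (ENNReal.ofReal_lt_ofReal_iff (lt_of_le_of_lt ENNReal.toReal_nonneg hu.1)).2 hu.1
    have h2 : ENNReal.ofReal u < θ := (ENNReal.ofReal_lt_iff_lt_toReal hu0 h.ne).2 hu.2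
    have h3 := hitAfter_min (S := S) (P := fun x => x ≤ 0) (a := a) h1 h2 (by simp)
    rw [ENNReal.toReal_ofReal hu0] at h3
    linarith [not_le.1 h3]
  linarith

end vals

section dnum
variable {S : ℝ → ℝ} {δ t : ℝ}

lemma excursion_finite (hS : Continuous S) (hS0 : S 0 = 0) (hδ : 0 < δ) (ht : 0 ≤ t) :
    {i : ℕ | 1 ≤ i ∧ thetaSeq S δ i ≤ ENNReal.ofReal t}.Finite := by
  by_contra hinf
  replace hinf : {i : ℕ | 1 ≤ i ∧ thetaSeq S δ i ≤ ENNReal.ofReal t}.Infinite := hinf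
  have hall : ∀ i : ℕ, thetaSeq S δ i ≤ ENNReal.ofReal t := by
    intro i
    obtain ⟨j, hj, hij⟩ := hinf.exists_gt i
    exact le_trans (theta_mono hij.le) hj.2
  have hfin : ∀ i : ℕ, thetaSeq S δ i < ⊤ :=
    fun i => lt_of_le_of_lt (hall i) (by simp)
  have hfinτ : ∀ i : ℕ, tauSeq S δ (i + 1) < ⊤ :=
    fun i => lt_of_le_of_lt (tau_le_theta i) (hfin (i + 1))
  set x : ℕ → ℝ := fun i => (thetaSeq S δ (i + 1)).toReal with hx
  set y : ℕ → ℝ := fun i => (tauSeq S δ (i + 1)).toReal with hy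
  have hxbd : ∀ i, x i ≤ t := fun i => by
    have := ENNReal.toReal_mono (by simp) (hall (i + 1))
    rwa [ENNReal.toReal_ofReal ht] at this
  have hybd : ∀ i, y i ≤ t := fun i => le_trans
    (ENNReal.toReal_mono (hfin (i+1)).ne (tau_le_theta i)) (hxbd i)
  have hxmono : Monotone x := fun i j hij =>
    ENNReal.toReal_mono (hfin (j+1)).ne (theta_mono (by omega))
  have hymono : Monotone y := fun i j hij => by
    refine ENNReal.toReal_mono (hfinτ j).ne ?_
    rcases Nat.eq_or_lt_of_le hij with rfl | hlt
    · exact le_rfl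
    · exact le_trans (le_trans (tau_le_theta i) (theta_mono (by omega))) (theta_le_tau j)
  have hyx : ∀ i, y i ≤ x i := fun i => ENNReal.toReal_mono (hfin (i+1)).ne (tau_le_theta i)
  have hxy : ∀ i, x i ≤ y (i + 1) := fun i => ENNReal.toReal_mono (hfinτ (i+1)).ne (theta_le_tau (i+1))
  have hxconv : Filter.Tendsto x Filter.atTop (nhds (⨆ i, x i)) :=
    tendsto_atTop_ciSup hxmono ⟨t, fun v ⟨i, hi⟩ => hi ▸ hxbd i⟩
  have hyconv : Filter.Tendsto y Filter.atTop (nhds (⨆ i, y i)) :=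
    tendsto_atTop_ciSup hymono ⟨t, fun v ⟨i, hi⟩ => hi ▸ hybd i⟩
  have hsupeq : (⨆ i, x i) = ⨆ i, y i := by
    apply le_antisymm
    · exact ciSup_le fun i => le_trans (hxy i) (le_ciSup ⟨t, fun v ⟨j, hj⟩ => hj ▸ hybd j⟩ (i+1))
    · exact ciSup_le fun i => le_trans (hyx i) (le_ciSup ⟨t, fun v ⟨j, hj⟩ => hj ▸ hxbd j⟩ i)
  have hSx : Filter.Tendsto (S ∘ x) Filter.atTop (nhds (S (⨆ i, x i))) :=
    (hS.tendsto _).comp hxconv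
  have hSy : Filter.Tendsto (S ∘ y) Filter.atTop (nhds (S (⨆ i, x i))) := by
    rw [hsupeq]; exact (hS.tendsto _).comp hyconv
  have hSx0 : ∀ i, (S ∘ x) i = 0 := fun i => theta_val hS hS0 hδ i (hfin (i+1))
  have hSyδ : ∀ i, (S ∘ y) i = δ := fun i => tau_val hS hS0 hδ i (hfinτ i)
  have e1 : S (⨆ i, x i) = 0 := by
    have : Filter.Tendsto (S ∘ x) Filter.atTop (nhds 0) := by
      simp only [funext hSx0]; exact tendsto_const_nhds
    exact tendsto_nhds_unique hSx this
  have e2 : S (⨆ i, x i) = δ := by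
    have : Filter.Tendsto (S ∘ y) Filter.atTop (nhds δ) := by
      simp only [funext hSyδ]; exact tendsto_const_nhds
    exact tendsto_nhds_unique hSy this
  rw [e1] at e2; linarith

lemma Dnum_spec (hS : Continuous S) (hS0 : S 0 = 0) (hδ : 0 < δ) (ht : 0 ≤ t) :
    (∀ k ≤ Dnum S δ t, thetaSeq S δ k ≤ ENNReal.ofReal t) ∧
      ENNReal.ofReal t < thetaSeq S δ (Dnum S δ t + 1) := by
  set A := {i : ℕ | 1 ≤ i ∧ thetaSeq S δ i ≤ ENNReal.ofReal t} with hA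
  have hfin : A.Finite := excursion_finite hS hS0 hδ ht
  rcases A.eq_empty_or_nonempty with he | hne
  · have hD : Dnum S δ t = 0 := by rw [Dnum, ← hA, he, Set.ncard_empty]
    constructor
    · intro k hk
      rw [hD] at hk
      interval_cases k
      simp [theta_zero, ENNReal.ofReal_pos]
    · rw [hD]
      by_contra hcon
      push_neg at hcon
      have : (1 : ℕ) ∈ A := ⟨le_rfl, hcon⟩
      rw [he] at this; exact this
  · set F := hfin.toFinset with hF
    have hFne : F.Nonempty := by rwa [hF, Set.Finite.toFinset_nonempty]
    set m := F.max' hFne with hm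
    have hmA : m ∈ A := (Set.Finite.mem_toFinset hfin).mp (F.max'_mem hFne)
    have hAeq : A = Set.Icc 1 m := by
      ext i
      constructor
      · intro hi
        exact ⟨hi.1, F.le_max' i ((Set.Finite.mem_toFinset hfin).mpr hi)⟩
      · rintro ⟨h1, h2⟩
        exact ⟨h1, le_trans (theta_mono h2) hmA.2⟩
    have hD : Dnum S δ t = m := by
      rw [Dnum, ← hA, hAeq, ← Finset.coe_Icc, Set.ncard_coe_finset, Nat.card_Icc]
      omega
    constructor
    · intro k hk
      rw [hD] at hk
      rcases Nat.eq_zero_or_pos k with rfl | hk1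
      · simp [theta_zero]
      · have : k ∈ A := hAeq ▸ Set.mem_Icc.2 ⟨hk1, hk⟩
        exact this.2
    · rw [hD]
      by_contra hcon
      push_neg at hcon
      have hmem : (m + 1) ∈ A := ⟨by omega, hcon⟩
      have := F.le_max' (m + 1) ((Set.Finite.mem_toFinset hfin).mpr hmem)
      omega

end dnum

-- generic helpers
lemma chain_le (c : ℕ → ℝ) (m : ℕ) (hc : ∀ k < m, c k ≤ c (k + 1)) :
    ∀ i j, i ≤ j → j ≤ m → c i ≤ c j := by
  intro i j hij hjm
  induction j with
  | zero =>
    have : i = 0 := by omega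
    rw [this]
  | succ n ih =>
    rcases Nat.eq_or_lt_of_le hij with rfl | hlt
    · exact le_rfl
    · exact le_trans (ih (by omega) (by omega)) (hc n (by omega))

lemma Icc_chain_union (c : ℕ → ℝ) (m : ℕ) (hc : ∀ k < m + 1, c k ≤ c (k + 1)) :
    Set.Icc (c 0) (c (m + 1)) = ⋃ k ∈ Finset.range (m + 1), Set.Icc (c k) (c (k + 1)) := by
  induction m with
  | zero => simp
  | succ n ih =>
    have hc' : ∀ k < n + 1, c k ≤ c (k + 1) := fun k _ => hc k (by omega)
    rw [Finset.range_add_one, Finset.set_biUnion_insert]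
    rw [← ih hc', Set.union_comm,
      Set.Icc_union_Icc_eq_Icc (chain_le c (n + 2) hc 0 (n + 1) (by omega) (by omega))
        (hc (n + 1) (by omega))]

lemma sSup_image_eq_of_rel {A B : Set ℝ} {f g : ℝ → ℝ} (hA : A.Nonempty) (hB : B.Nonempty)
    (hbB : BddAbove (g '' B))
    (h1 : ∀ x ∈ A, ∃ y ∈ B, f x ≤ g y) (h2 : ∀ y ∈ B, ∃ x ∈ A, g y ≤ f x) :
    sSup (f '' A) = sSup (g '' B) := by
  have hbA : BddAbove (f '' A) := by
    refine ⟨sSup (g '' B), ?_⟩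
    rintro z ⟨x, hx, rfl⟩
    obtain ⟨y, hy, hxy⟩ := h1 x hx
    exact le_trans hxy (le_csSup hbB ⟨y, hy, rfl⟩)
  apply le_antisymm
  · refine csSup_le (hA.image f) ?_
    rintro z ⟨x, hx, rfl⟩
    obtain ⟨y, hy, hxy⟩ := h1 x hx
    exact le_trans hxy (le_csSup hbB ⟨y, hy, rfl⟩)
  · refine csSup_le (hB.image g) ?_
    rintro z ⟨y, hy, rfl⟩
    obtain ⟨x, hx, hyx⟩ := h2 y hy
    exact le_trans hyx (le_csSup hbA ⟨x, hx, rfl⟩)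

lemma bdd_biUnion_range (T : ℕ → Set ℝ) (hbd : ∀ k, BddAbove (T k)) (m : ℕ) :
    BddAbove (⋃ k ∈ Finset.range m, T k) := by
  induction m with
  | zero => simp
  | succ n ih =>
    rw [Finset.range_add_one, Finset.set_biUnion_insert]
    exact (hbd n).union ih

lemma sSup_iUnion_eq_sup' (T : ℕ → Set ℝ) (m : ℕ)
    (hne : ∀ k ≤ m, (T k).Nonempty) (hbd : ∀ k ≤ m, BddAbove (T k)) :
    sSup (⋃ k ∈ Finset.range (m + 1), T k) =
      (Finset.range (m + 1)).sup' (by simp) fun k => sSup (T k) := by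
  induction m with
  | zero => simp
  | succ n ih =>
    have hne' : ∀ k ≤ n, (T k).Nonempty := fun k hk => hne k (by omega)
    have hbd' : ∀ k ≤ n, BddAbove (T k) := fun k hk => hbd k (by omega)
    have hbigne : (⋃ k ∈ Finset.range (n + 1), T k).Nonempty := by
      obtain ⟨x, hx⟩ := hne 0 (by omega)
      exact ⟨x, Set.mem_iUnion₂.2 ⟨0, by simp, hx⟩⟩
    have h1 : (⋃ k ∈ Finset.range (n + 1 + 1), T k) =
        T (n + 1) ∪ ⋃ k ∈ Finset.range (n + 1), T k := by
      rw [Finset.range_add_one, Finset.set_biUnion_insert]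
    have h2 : (Finset.range (n + 1 + 1)).sup' (by simp) (fun k => sSup (T k)) =
        sSup (T (n + 1)) ⊔ (Finset.range (n + 1)).sup' (by simp) (fun k => sSup (T k)) :=
      (Finset.sup'_congr _ Finset.range_add_one (fun _ _ => rfl)).trans
        (Finset.sup'_insert (H := Finset.nonempty_range_add_one) _)
    have hbigbd : BddAbove (⋃ k ∈ Finset.range (n + 1), T k) := by
      have : ∀ m', m' ≤ n + 1 → BddAbove (⋃ k ∈ Finset.range m', T k) := by
        intro m' hm'
        induction m' with
        | zero => simp
        | succ j ihj =>
          rw [Finset.range_add_one, Finset.set_biUnion_insert]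
          exact (hbd j (by omega)).union (ihj (by omega))
      exact this (n + 1) le_rfl
    rw [h1, h2, csSup_union (hbd _ le_rfl) (hne _ le_rfl) hbigbd hbigne, ih hne' hbd']

lemma ofReal_clip_le {s : ℝ} (a : ℝ≥0∞) : ENNReal.ofReal (clip s a) ≤ a := by
  rw [clip]
  split_ifs with h
  · calc ENNReal.ofReal (min s a.toReal) ≤ ENNReal.ofReal a.toReal :=
          ENNReal.ofReal_le_ofReal (min_le_right _ _)
    _ = a := ENNReal.ofReal_toReal h.ne
  · rw [top_le_iff.mp (not_lt.mp h)]
    exact le_top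

section main
variable {S : ℝ → ℝ} {δ t : ℝ}

lemma gain_eq (ht : 0 ≤ t) {N : ℕ}
    (hθgt : ENNReal.ofReal t < thetaSeq S δ (N + 1)) {s : ℝ} (hs : s ∈ Set.Icc (0:ℝ) t) :
    portfolioGain S δ s = ∑ i ∈ Finset.range (N + 1),
      (S (clip s (tauSeq S δ (i + 1))) - S (clip s (thetaSeq S δ (i + 1)))) := by
  rw [portfolioGain]
  apply tsum_eq_sum
  intro i hi
  have hiN : N + 1 ≤ i := by simpa using hi
  have h1 : ENNReal.ofReal s ≤ thetaSeq S δ (N + 1) :=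
    le_trans (ENNReal.ofReal_le_ofReal hs.2) hθgt.le
  have hτ : ENNReal.ofReal s ≤ tauSeq S δ (i + 1) :=
    h1.trans ((theta_mono hiN).trans (theta_le_tau i))
  have hθ : ENNReal.ofReal s ≤ thetaSeq S δ (i + 1) := hτ.trans (tau_le_theta i)
  rw [clip_of_le hs.1 hτ, clip_of_le hs.1 hθ, sub_self]

lemma F_eval (hS : Continuous S) (hS0 : S 0 = 0) (hδ : 0 < δ) (ht : 0 ≤ t) {N k : ℕ}
    (hk : k ≤ N)
    (hθle : ∀ j ≤ N, thetaSeq S δ j ≤ ENNReal.ofReal t)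
    (hθgt : ENNReal.ofReal t < thetaSeq S δ (N + 1))
    {s : ℝ} (hs : s ∈ Set.Icc (clip t (thetaSeq S δ k)) (clip t (thetaSeq S δ (k + 1)))) :
    portfolioGain S δ s = k * δ + (S (clip s (tauSeq S δ (k + 1))) - S s) := by
  have hs0 : 0 ≤ s := le_trans (clip_nonneg ht _) hs.1
  have hst : s ≤ t := le_trans hs.2 (clip_le_self _)
  have hθkfin : thetaSeq S δ k < ⊤ := lt_of_le_of_lt (hθle k hk) (by simp)
  have hsk : thetaSeq S δ k ≤ ENNReal.ofReal s := by
    have hge : (thetaSeq S δ k).toReal ≤ s := by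
      rw [← clip_of_ge ht (hθle k hk)]; exact hs.1
    calc thetaSeq S δ k = ENNReal.ofReal (thetaSeq S δ k).toReal :=
          (ENNReal.ofReal_toReal hθkfin.ne).symm
    _ ≤ ENNReal.ofReal s := ENNReal.ofReal_le_ofReal hge
  have hsk1 : ENNReal.ofReal s ≤ thetaSeq S δ (k + 1) :=
    le_trans (ENNReal.ofReal_le_ofReal hs.2) (ofReal_clip_le _)
  rw [gain_eq ht hθgt ⟨hs0, hst⟩]
  set f : ℕ → ℝ := fun i => S (clip s (tauSeq S δ (i + 1))) - S (clip s (thetaSeq S δ (i + 1)))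
    with hf
  have hterm_lt : ∀ i < k, f i = δ := by
    intro i hi
    have hθi1 : thetaSeq S δ (i + 1) ≤ ENNReal.ofReal s :=
      le_trans (theta_mono (show i + 1 ≤ k by omega)) hsk
    have hτi1 : tauSeq S δ (i + 1) ≤ ENNReal.ofReal s := le_trans (tau_le_theta i) hθi1
    have hθfin : thetaSeq S δ (i + 1) < ⊤ := lt_of_le_of_lt hθi1 (by simp)
    have hτfin : tauSeq S δ (i + 1) < ⊤ := lt_of_le_of_lt hτi1 (by simp)
    rw [hf]
    simp only
    rw [clip_of_ge hs0 hτi1, clip_of_ge hs0 hθi1, tau_val hS hS0 hδ i hτfin,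
      theta_val hS hS0 hδ i hθfin, sub_zero]
  have hterm_gt : ∀ i, k < i → f i = 0 := by
    intro i hi
    have hτi : ENNReal.ofReal s ≤ tauSeq S δ (i + 1) :=
      le_trans hsk1 (le_trans (theta_mono (show k + 1 ≤ i from hi)) (theta_le_tau i))
    have hθi : ENNReal.ofReal s ≤ thetaSeq S δ (i + 1) := hτi.trans (tau_le_theta i)
    rw [hf]
    simp only
    rw [clip_of_le hs0 hτi, clip_of_le hs0 hθi, sub_self]
  have hterm_k : f k = S (clip s (tauSeq S δ (k + 1))) - S s := by
    rw [hf]; simp only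
    rw [clip_of_le hs0 hsk1]
  have hsplit : ∑ i ∈ Finset.range (N + 1), f i =
      ∑ i ∈ Finset.range k, f i + ∑ i ∈ Finset.Ico k (N + 1), f i :=
    (Finset.sum_range_add_sum_Ico f (by omega)).symm
  have h1 : ∑ i ∈ Finset.range k, f i = k * δ := by
    rw [Finset.sum_congr rfl (fun i hi => hterm_lt i (Finset.mem_range.mp hi)),
      Finset.sum_const, Finset.card_range, nsmul_eq_mul]
  have h2 : ∑ i ∈ Finset.Ico k (N + 1), f i = f k := by
    rw [Finset.sum_eq_sum_Ico_succ_bot (by omega) f]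
    rw [Finset.sum_eq_zero (fun i hi => hterm_gt i (by
      have := Finset.mem_Ico.mp hi; omega)), add_zero]
  rw [hsplit, h1, h2, hterm_k]

lemma key_k (hS : Continuous S) (hS0 : S 0 = 0) (hδ : 0 < δ) (ht : 0 ≤ t) {N k : ℕ}
    (hk : k ≤ N)
    (hθle : ∀ j ≤ N, thetaSeq S δ j ≤ ENNReal.ofReal t)
    (hθgt : ENNReal.ofReal t < thetaSeq S δ (N + 1)) :
    sSup ((fun s => -portfolioGain S δ s) ''
        Set.Icc (clip t (thetaSeq S δ k)) (clip t (thetaSeq S δ (k + 1)))) =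
      sSup ((fun u => vpiece S δ (k + 1) u - ((k + 1 : ℕ) : ℝ) * δ) ''
        Set.Icc 0 ((ENNReal.ofReal t - tauSeq S δ (k + 1)).toReal)) := by
  set τ := tauSeq S δ (k + 1) with hτdef
  set θ := thetaSeq S δ (k + 1) with hθdef
  set r := τ.toReal with hrdef
  have hr0 : 0 ≤ r := ENNReal.toReal_nonneg
  set ck := clip t (thetaSeq S δ k) with hckdef
  set ck1 := clip t θ with hck1def
  set e := (ENNReal.ofReal t - τ).toReal with hedef
  have he0 : 0 ≤ e := ENNReal.toReal_nonneg
  have hAne : (Set.Icc ck ck1).Nonempty :=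
    Set.nonempty_Icc.2 (clip_mono ht (theta_mono (Nat.le_succ k)))
  have hBne : (Set.Icc (0:ℝ) e).Nonempty := Set.nonempty_Icc.2 he0
  have hτθ : τ ≤ θ := tau_le_theta k
  have hGval : ∀ u, vpiece S δ (k + 1) u - ((k + 1 : ℕ) : ℝ) * δ =
      δ + S (clip (u + r) θ) - S r - ((k:ℝ) + 1) * δ := by
    intro u; simp only [vpiece]; push_cast; ring
  have hck_eval : ck = (thetaSeq S δ k).toReal := clip_of_ge ht (hθle k hk)
  have hθk_fin : thetaSeq S δ k < ⊤ := lt_of_le_of_lt (hθle k hk) (by simp)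
  rcases le_or_gt (ENNReal.ofReal t) τ with hcase | hcase
  · -- τ beyond horizon: both sides are constants -(k δ)
    have hez : e = 0 := by rw [hedef, tsub_eq_zero_of_le hcase, ENNReal.toReal_zero]
    have hG0 : vpiece S δ (k + 1) 0 - ((k + 1 : ℕ) : ℝ) * δ = -((k:ℝ) * δ) := by
      rw [hGval 0, zero_add]
      have hclip : S (clip r θ) = S r := by
        rcases eq_or_ne τ ⊤ with htop | hfin
        · have hθtop : θ = ⊤ := by
            rw [hθdef, show thetaSeq S δ (k+1)
              = hitAfter S (fun x => x ≤ 0) (tauSeq S δ (k+1)) from rfl, ← hτdef,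
              htop, hitAfter_top]
          have hr' : r = 0 := by rw [hrdef, htop]; simp
          rw [hθtop, hr']
          simp [clip]
        · have h5 : ENNReal.ofReal r ≤ θ := by
            rw [hrdef, ENNReal.ofReal_toReal hfin]; exact hτθ
          rw [clip_of_le hr0 h5]
      rw [hclip]; ring
    have hFc : ∀ s ∈ Set.Icc ck ck1, (fun s => -portfolioGain S δ s) s = -((k:ℝ) * δ) := by
      intro s hs
      have hs0 : 0 ≤ s := le_trans (clip_nonneg ht _) hs.1
      have hst : s ≤ t := le_trans hs.2 (clip_le_self _)
      have hclip : clip s τ = s :=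
        clip_of_le hs0 (le_trans (ENNReal.ofReal_le_ofReal hst) hcase)
      show -portfolioGain S δ s = -((k:ℝ) * δ)
      rw [F_eval hS hS0 hδ ht hk hθle hθgt hs]
      rw [hclip]; ring
    rw [hez]
    rw [Set.image_congr hFc, hAne.image_const, csSup_singleton]
    rw [Set.Icc_self, Set.image_singleton, csSup_singleton, hG0]
  · -- τ before horizon
    have hτfin : τ < ⊤ := lt_of_lt_of_le hcase le_top
    have hSr : S r = δ := tau_val hS hS0 hδ k hτfin
    have hrt : r ≤ t := by
      have := ENNReal.toReal_mono (by simp : ENNReal.ofReal t ≠ ⊤) hcase.le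
      rwa [ENNReal.toReal_ofReal ht] at this
    have hee : e = t - r := by
      rw [hedef, ENNReal.toReal_sub_of_le hcase.le (by simp), ENNReal.toReal_ofReal ht]
    have hofr : ENNReal.ofReal r = τ := ENNReal.ofReal_toReal hτfin.ne
    have hck_le_r : ck ≤ r := by
      rw [hck_eval, hrdef]
      exact ENNReal.toReal_mono hτfin.ne (theta_le_tau k)
    -- bound for S on [0, t]
    obtain ⟨x0, -, hx0⟩ := isCompact_Icc.exists_isMaxOn (Set.nonempty_Icc.2 ht)
      hS.continuousOn
    set M := S x0 with hMdef
    have hbB : BddAbove ((fun u => vpiece S δ (k + 1) u - ((k + 1 : ℕ) : ℝ) * δ) ''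
        Set.Icc (0:ℝ) e) := by
      refine ⟨M - (k:ℝ) * δ, ?_⟩
      rintro z ⟨u, hu, rfl⟩
      show vpiece S δ (k + 1) u - ((k + 1 : ℕ) : ℝ) * δ ≤ M - (k:ℝ) * δ
      rw [hGval u, hSr]
      have hc1 : clip (u + r) θ ∈ Set.Icc (0:ℝ) t := by
        constructor
        · exact clip_nonneg (by linarith [hu.1]) _
        · exact le_trans (clip_le_self _) (by rw [hee] at hu; linarith [hu.2])
      have hb : S (clip (u + r) θ) ≤ S x0 := hx0 hc1
      simp only [hMdef]
      linarith [hδ.le]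
    refine sSup_image_eq_of_rel hAne hBne hbB ?_ ?_
    · intro s hs
      have hs0 : 0 ≤ s := le_trans (clip_nonneg ht _) hs.1
      have hst : s ≤ t := le_trans hs.2 (clip_le_self _)
      have hsθ : ENNReal.ofReal s ≤ θ :=
        le_trans (ENNReal.ofReal_le_ofReal hs.2) (ofReal_clip_le _)
      have hFs := F_eval hS hS0 hδ ht hk hθle hθgt hs
      rcases le_or_gt s r with hsr | hrs
      · refine ⟨0, Set.left_mem_Icc.2 he0, ?_⟩
        have hclips : clip s τ = s :=
          clip_of_le hs0 (by rw [← hofr]; exact ENNReal.ofReal_le_ofReal hsr)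
        have hclipr : clip (0 + r) θ = r := by
          rw [zero_add]; exact clip_of_le hr0 (hofr ▸ hτθ)
        show -portfolioGain S δ s ≤ vpiece S δ (k + 1) 0 - ((k + 1 : ℕ) : ℝ) * δ
        rw [hGval 0, hclipr, hFs, hclips]
        ring_nf
        exact le_rfl
      · refine ⟨s - r, ⟨by linarith, by rw [hee]; linarith⟩, ?_⟩
        have hclips : clip s τ = r :=
          clip_of_ge hs0 (by rw [← hofr]; exact ENNReal.ofReal_le_ofReal hrs.le)
        have hclip2 : clip (s - r + r) θ = s := by
          rw [sub_add_cancel]; exact clip_of_le hs0 hsθ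
        show -portfolioGain S δ s ≤ vpiece S δ (k + 1) (s - r) - ((k + 1 : ℕ) : ℝ) * δ
        rw [hGval (s - r), hclip2, hFs, hclips, hSr]
        ring_nf
        exact le_rfl
    · intro u hu
      have hu0 : 0 ≤ u := hu.1
      have hs'0 : 0 ≤ u + r := by linarith
      have hs't : u + r ≤ t := by rw [hee] at hu; linarith [hu.2]
      have hrs' : ENNReal.ofReal (u + r) ≥ τ := by
        rw [← hofr]; exact ENNReal.ofReal_le_ofReal (by linarith)
      rcases le_or_gt (ENNReal.ofReal (u + r)) θ with hsθ | hθs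
      · refine ⟨u + r, ⟨?_, ?_⟩, ?_⟩
        · calc ck ≤ r := hck_le_r
          _ ≤ u + r := by linarith
        · rw [hck1def, clip]
          split_ifs with hθfin2
          · refine le_min hs't ?_
            have := ENNReal.toReal_mono hθfin2.ne hsθ
            rwa [ENNReal.toReal_ofReal hs'0] at this
          · exact hs't
        · have hmem : u + r ∈ Set.Icc ck ck1 := by
            constructor
            · calc ck ≤ r := hck_le_r
              _ ≤ u + r := by linarith
            · rw [hck1def, clip]
              split_ifs with hθfin2
              · refine le_min hs't ?_
                have := ENNReal.toReal_mono hθfin2.ne hsθ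
                rwa [ENNReal.toReal_ofReal hs'0] at this
              · exact hs't
          have hFs := F_eval hS hS0 hδ ht hk hθle hθgt hmem
          have hclips : clip (u + r) τ = r := clip_of_ge hs'0 hrs'
          have hclipθ : clip (u + r) θ = u + r := clip_of_le hs'0 hsθ
          show vpiece S δ (k + 1) u - ((k + 1 : ℕ) : ℝ) * δ ≤ -portfolioGain S δ (u + r)
          rw [hGval u, hclipθ, hFs, hclips, hSr]
          ring_nf
          exact le_rfl
      · have hθt : θ ≤ ENNReal.ofReal t :=
          le_trans hθs.le (ENNReal.ofReal_le_ofReal hs't)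
        have hθfin2 : θ < ⊤ := lt_of_le_of_lt hθt (by simp)
        have hθtr : θ.toReal ≤ t := by
          have := ENNReal.toReal_mono (by simp : ENNReal.ofReal t ≠ ⊤) hθt
          rwa [ENNReal.toReal_ofReal ht] at this
        have hrθr : r ≤ θ.toReal := ENNReal.toReal_mono hθfin2.ne hτθ
        have hck1v : ck1 = θ.toReal := clip_of_ge ht hθt
        have hmem : θ.toReal ∈ Set.Icc ck ck1 := by
          constructor
          · exact le_trans hck_le_r hrθr
          · rw [hck1v]
        refine ⟨θ.toReal, hmem, ?_⟩
        have hFs := F_eval hS hS0 hδ ht hk hθle hθgt hmem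
        have hclips : clip θ.toReal τ = r :=
          clip_of_ge ENNReal.toReal_nonneg (by rw [ENNReal.ofReal_toReal hθfin2.ne]; exact hτθ)
        have hclipθ : clip (u + r) θ = θ.toReal := clip_of_ge hs'0 hθs.le
        show vpiece S δ (k + 1) u - ((k + 1 : ℕ) : ℝ) * δ ≤ -portfolioGain S δ θ.toReal
        rw [hGval u, hclipθ, hFs, hclips, hSr]
        ring_nf
        exact le_rfl

lemma F_bdd (hS : Continuous S) (hS0 : S 0 = 0) (hδ : 0 < δ) (ht : 0 ≤ t) {N k : ℕ}
    (hk : k ≤ N)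
    (hθle : ∀ j ≤ N, thetaSeq S δ j ≤ ENNReal.ofReal t)
    (hθgt : ENNReal.ofReal t < thetaSeq S δ (N + 1)) :
    BddAbove ((fun s => -portfolioGain S δ s) ''
      Set.Icc (clip t (thetaSeq S δ k)) (clip t (thetaSeq S δ (k + 1)))) := by
  obtain ⟨C, hC⟩ := isCompact_Icc.exists_bound_of_continuousOn
    (hS.continuousOn : ContinuousOn S (Set.Icc 0 t))
  refine ⟨2 * C, ?_⟩
  rintro z ⟨s, hs, rfl⟩
  have hs0 : 0 ≤ s := le_trans (clip_nonneg ht _) hs.1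
  have hst : s ≤ t := le_trans hs.2 (clip_le_self _)
  show -portfolioGain S δ s ≤ 2 * C
  rw [F_eval hS hS0 hδ ht hk hθle hθgt hs]
  have h1 := hC (clip s (tauSeq S δ (k + 1)))
    ⟨clip_nonneg hs0 _, le_trans (clip_le_self _) hst⟩
  have h2 := hC s ⟨hs0, hst⟩
  rw [Real.norm_eq_abs] at h1 h2
  have hkδ : (0:ℝ) ≤ (k:ℝ) * δ := mul_nonneg (Nat.cast_nonneg k) hδ.le
  have ha1 := abs_le.1 h1
  have ha2 := abs_le.1 h2
  linarith [ha1.1, ha1.2, ha2.1, ha2.2]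

end main

/-- The worst loss `max_{s ∈ [0,t]} (V_0(φ⁺) - V_s(φ⁺))` of the one-sided strategy `φ⁺`
equals `max_{k = 0, …, D^δ_t(S)} max_{[0, (t - τ⁺_{k+1})₊]} (v_{k+1} - (k+1) δ)`. -/
theorem worst_loss_formula (S : ℝ → ℝ) (hS : Continuous S) (hS0 : S 0 = 0)
    (δ t : ℝ) (hδ : 0 < δ) (ht : 0 ≤ t) :
    sSup ((fun s => -portfolioGain S δ s) '' Set.Icc 0 t) =
      (Finset.range (Dnum S δ t + 1)).sup' (by simp) (fun k =>
        sSup ((fun u => vpiece S δ (k + 1) u - ((k + 1 : ℕ) : ℝ) * δ) ''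
          Set.Icc 0 ((ENNReal.ofReal t - tauSeq S δ (k + 1)).toReal))) := by
  obtain ⟨hθle, hθgt⟩ := Dnum_spec hS hS0 hδ ht (S := S) (δ := δ) (t := t)
  set N := Dnum S δ t with hN
  set c : ℕ → ℝ := fun k => clip t (thetaSeq S δ k) with hc
  have hcmono : ∀ k < N + 1, c k ≤ c (k + 1) :=
    fun k _ => clip_mono ht (theta_mono (Nat.le_succ k))
  have hc0 : c 0 = 0 := by
    have h0 : thetaSeq S δ 0 ≤ ENNReal.ofReal t := by
      rw [theta_zero]; exact zero_le
    show clip t (thetaSeq S δ 0) = 0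
    rw [clip_of_ge ht h0, theta_zero, ENNReal.toReal_zero]
  have hcN : c (N + 1) = t := clip_of_le ht hθgt.le
  have hdecomp : Set.Icc (0:ℝ) t = ⋃ k ∈ Finset.range (N + 1), Set.Icc (c k) (c (k + 1)) := by
    rw [← hc0, ← hcN]
    exact Icc_chain_union c N hcmono
  rw [hdecomp, Set.image_iUnion₂]
  rw [sSup_iUnion_eq_sup' (fun k => (fun s => -portfolioGain S δ s) '' Set.Icc (c k) (c (k + 1)))
    N
    (fun k _ => (Set.nonempty_Icc.2 (clip_mono ht (theta_mono (Nat.le_succ k)))).image _)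
    (fun k hk => F_bdd hS hS0 hδ ht hk hθle hθgt)]
  refine Finset.sup'_congr _ rfl ?_
  intro k hkmem
  have hk : k ≤ N := by
    have := Finset.mem_range.mp hkmem; omega
  exact key_k hS hS0 hδ ht hk hθle hθgt
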